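/- arXiv:2312.01189 — 7 statements merged into one kernel-verified Lean document; each statement's English description precedes it below -/
import Mathlib

section
/- Let f be a nonzero Laurent polynomial with nonnegative integer coefficients. If f(1) is a prime number, then f is irreducible in the semiring ℕ[x^{±1}] of Laurent polynomials with nonnegative integer coefficients. -/
/-- The semiring of Laurent polynomials with nonnegative integer coefficients, ℕ[x^{±1}]. -/
abbrev NL : Type := AddMonoidAlgebra ℕ ℤ

/-- The monomial `c • x^k` in ℕ[x^{±1}]. -/
noncomputable def mono (k : ℤ) (c : ℕ) : NL := AddMonoidAlgebra.single k c

/-- Evaluation at 1, i.e. the sum of the coefficients. -/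
def evalOne (f : NL) : ℕ := f.coeff.sum fun _ c => c

/-- A monomial is `c x^k` with `c ≥ 1`. -/
def IsMonomial (f : NL) : Prop := ∃ (c : ℕ) (k : ℤ), 0 < c ∧ f = mono k c

/-- A nonzero `f` is monolithic if any factorization has a monomial factor. -/
def Monolithic (f : NL) : Prop :=
  f ≠ 0 ∧ ∀ g h : NL, f = g * h → IsMonomial g ∨ IsMonomial h

/-- `f` is hyper-monolithic: it has ≥ 2 terms, written with positive coefficients and
strictly decreasing exponents `k 0 > ⋯ > k n`, and either the first gap is strictly
smaller than every later gap, or the last gap is strictly smaller than every earlier gap. -/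
def HyperMonolithic (f : NL) : Prop :=
  ∃ (n : ℕ) (k : ℕ → ℤ) (c : ℕ → ℕ),
    1 ≤ n ∧ (∀ i j, i < j → j ≤ n → k j < k i) ∧ (∀ i, i ≤ n → 0 < c i) ∧
    f = ∑ i ∈ Finset.range (n + 1), mono (k i) (c i) ∧
    ((∀ i, 1 ≤ i → i + 1 ≤ n → k 0 - k 1 < k i - k (i + 1)) ∨
     (∀ j, j + 2 ≤ n → k (n - 1) - k n < k j - k (j + 1)))

/-! Evaluation at `1` is a semiring map `ℕ[x^{±1}] → ℕ` that reflects units: with nonnegative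
coefficients, a coefficient sum of `1` forces `f = x^k`. Irreducibility of `f(1)` therefore
pulls back to `f`. -/

noncomputable def evalOneHom : NL →ₐ[ℕ] ℕ := AddMonoidAlgebra.lift ℕ ℕ ℤ 1

lemma evalOneHom_apply (f : NL) : evalOneHom f = evalOne f := by
  simp [evalOneHom, AddMonoidAlgebra.lift_apply, evalOne]

lemma exists_eq_mono_one_of_evalOne_eq_one {f : NL} (h : evalOne f = 1) : ∃ k, f = mono k 1 := by
  classical
  obtain ⟨k, hk⟩ := Multiset.card_eq_one.mp <| (Finsupp.card_toMultiset f.coeff).trans h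
  refine ⟨k, AddMonoidAlgebra.coeff_injective ?_⟩
  rw [← Finsupp.toMultiset_toFinsupp f.coeff, hk, mono, AddMonoidAlgebra.coeff_single]
  simp

lemma isUnit_mono_one (k : ℤ) : IsUnit (mono k 1) :=
  .of_mul_eq_one (mono (-k) 1) <| by
    rw [mono, mono, AddMonoidAlgebra.single_mul_single, add_neg_cancel, mul_one]; rfl

instance : IsLocalHom evalOneHom where
  map_nonunit f hf := by
    obtain ⟨k, rfl⟩ := exists_eq_mono_one_of_evalOne_eq_one <|
      (evalOneHom_apply f).symm.trans (Nat.isUnit_iff.mp hf)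
    exact isUnit_mono_one k

theorem stmt0_general (f : NL) (hp : (evalOne f).Prime) : Irreducible f :=
  .of_map (f := evalOneHom) <| (evalOneHom_apply f).symm ▸ hp

/-- If `f ≠ 0` and `f(1)` is prime, then `f` is irreducible in ℕ[x^{±1}]. -/
theorem stmt0 (f : NL) (hf : f ≠ 0) (hp : (evalOne f).Prime) : Irreducible f :=
  stmt0_general f hp
end

section
/- Let f ∈ ℕ[x^{±1}] be such that f(1) = p + q where p and q are prime numbers. Then f can be written as the sum of two irreducible elements of ℕ[x^{±1}]. -/
/-! Evaluation at 1 is a semiring homomorphism `ℕ[x^{±1}] → ℕ` under which elements of value 1 are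
units `x^k`, so an element with prime value at 1 is irreducible. Reading `f` as the multiset of its
exponents, counted with multiplicity, which has cardinality `f(1) = p + q`, split it into two
sub-multisets of sizes `p` and `q`. -/

theorem Multiset.exists_eq_add_of_card_eq_add {α : Type*} {s : Multiset α} {m n : ℕ}
    (h : Multiset.card s = m + n) :
    ∃ t u, s = t + u ∧ Multiset.card t = m ∧ Multiset.card u = n := by
  induction s using Quot.inductionOn with
  | h l =>
    refine ⟨l.take m, l.drop m, by rw [Multiset.coe_add, List.take_append_drop]; rfl, ?_, ?_⟩ <;>
      simp_all

namespace NL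

noncomputable def toMultiset : NL ≃+ Multiset ℤ :=
  AddMonoidAlgebra.coeffAddEquiv.trans Multiset.toFinsupp.symm

theorem card_toMultiset (f : NL) : Multiset.card (toMultiset f) = evalOne f :=
  Finsupp.card_toMultiset f.coeff

noncomputable def evalOneHom : NL →+* ℕ :=
  (AddMonoidAlgebra.lift ℕ ℕ ℤ 1).toRingHom

theorem evalOneHom_apply (f : NL) : evalOneHom f = evalOne f := by
  simp [evalOneHom, AddMonoidAlgebra.lift_apply, evalOne]

theorem exists_eq_add_of_evalOne_eq_add {f : NL} {m n : ℕ} (h : evalOne f = m + n) :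
    ∃ g g', f = g + g' ∧ evalOne g = m ∧ evalOne g' = n := by
  rw [← card_toMultiset] at h
  obtain ⟨t, u, htu, ht, hu⟩ := Multiset.exists_eq_add_of_card_eq_add h
  refine ⟨toMultiset.symm t, toMultiset.symm u, ?_, ?_, ?_⟩
  · rw [← map_add, ← htu, AddEquiv.symm_apply_apply]
  · rw [← card_toMultiset, AddEquiv.apply_symm_apply, ht]
  · rw [← card_toMultiset, AddEquiv.apply_symm_apply, hu]

theorem isUnit_of_evalOne_eq_one {g : NL} (hg : evalOne g = 1) : IsUnit g := by
  rw [← card_toMultiset, Multiset.card_eq_one] at hg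
  obtain ⟨a, ha⟩ := hg
  have : g = AddMonoidAlgebra.of ℕ ℤ (Multiplicative.ofAdd a) := by
    rw [← toMultiset.symm_apply_apply g, ha]
    simp [toMultiset, Multiset.toFinsupp_singleton]
  exact this ▸ (Group.isUnit _).map _

theorem irreducible_of_prime_evalOne {g : NL} (hg : (evalOne g).Prime) : Irreducible g := by
  refine ⟨fun hu => hg.ne_one ?_, fun a b hab => ?_⟩
  · rw [← evalOneHom_apply]; exact Nat.isUnit_iff.1 (hu.map evalOneHom)
  · rw [← evalOneHom_apply, hab, map_mul, evalOneHom_apply, evalOneHom_apply] at hg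
    exact (Nat.prime_mul_iff.1 hg).symm.imp (isUnit_of_evalOne_eq_one ·.2)
      (isUnit_of_evalOne_eq_one ·.2)

end NL

/-- If `f(1) = p + q` with `p, q` prime, then `f` is a sum of two irreducibles. -/
theorem stmt2 (f : NL) (p q : ℕ) (hp : p.Prime) (hq : q.Prime)
    (h : evalOne f = p + q) :
    ∃ g h : NL, Irreducible g ∧ Irreducible h ∧ f = g + h := by
  obtain ⟨g, g', rfl, hg, hg'⟩ := NL.exists_eq_add_of_evalOne_eq_add h
  exact ⟨g, g', NL.irreducible_of_prime_evalOne (hg ▸ hp),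
    NL.irreducible_of_prime_evalOne (hg' ▸ hq), rfl⟩
end

section
/- Every hyper-monolithic Laurent polynomial f ∈ ℕ[x^{±1}] is monolithic. -/
open Finset
open scoped Pointwise

namespace AddMonoidAlgebra

variable {R G : Type*} [Semiring R] [PartialOrder R] [CanonicallyOrderedAdd R] [NoZeroDivisors R]
  [AddMonoid G] [DecidableEq G]

theorem support_coeff_mul_eq_add (x y : AddMonoidAlgebra R G) :
    (x * y).coeff.support = x.coeff.support + y.coeff.support := by
  refine (support_coeff_mul_subset x y).antisymm ?_
  intro _ hab
  obtain ⟨a, ha, b, hb, rfl⟩ := mem_add.1 hab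
  rw [Finsupp.mem_support_iff] at ha hb ⊢
  -- in a canonically ordered semiring a sum vanishes only if each of its terms does
  rw [coeff_mul, Finsupp.sum, Ne, sum_eq_zero_iff, not_forall]
  refine ⟨a, fun h => mul_ne_zero ha hb ?_⟩
  have := sum_eq_zero_iff.1 (h (Finsupp.mem_support_iff.2 ha)) b (Finsupp.mem_support_iff.2 hb)
  simpa using this

end AddMonoidAlgebra

theorem support_coeff_sum_mono {ι : Type*} (s : Finset ι) (k : ι → ℤ) (c : ι → ℕ)
    (hc : ∀ i ∈ s, 0 < c i) : (∑ i ∈ s, mono (k i) (c i)).coeff.support = s.image k := by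
  ext t
  simp only [Finsupp.mem_support_iff, AddMonoidAlgebra.coeff_sum, Finsupp.finsetSum_apply,
    Ne, sum_eq_zero_iff, not_forall, mono, AddMonoidAlgebra.coeff_single,
    Finsupp.single_apply, mem_image, exists_prop]
  refine exists_congr fun i => and_congr_right fun hi => ?_
  simp [(hc i hi).ne']

theorem support_coeff_nontrivial_of_not_isMonomial {g : NL} (hg₀ : g ≠ 0) (hg : ¬ IsMonomial g) :
    g.coeff.support.Nontrivial := by
  have hne := Finsupp.support_nonempty_iff.2 (AddMonoidAlgebra.coeff_eq_zero.not.2 hg₀)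
  obtain ⟨a, ha⟩ | h := hne.exists_eq_singleton_or_nontrivial
  · obtain ⟨ha₀, hg_eq⟩ := Finsupp.support_eq_singleton.1 ha
    exact (hg ⟨_, a, Nat.pos_of_ne_zero ha₀, AddMonoidAlgebra.coeff_injective hg_eq⟩).elim
  · exact h

theorem Finset.Nontrivial.exists_top_two {α : Type*} [LinearOrder α] {A : Finset α}
    (hA : A.Nontrivial) : ∃ a₀ ∈ A, ∃ a₁ ∈ A, a₁ < a₀ ∧ ∀ a ∈ A, a ≠ a₀ → a ≤ a₁ := by
  set a₀ := A.max' hA.nonempty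
  have hne : (A.erase a₀).Nonempty := hA.erase_nonempty
  have ha₁ := (A.erase a₀).max'_mem hne
  refine ⟨a₀, A.max'_mem _, _, mem_of_mem_erase ha₁,
    (A.le_max' _ (mem_of_mem_erase ha₁)).lt_of_ne (ne_of_mem_erase ha₁),
    fun a ha ha₀ => (A.erase a₀).le_max' a (mem_erase.2 ⟨ha₀, ha⟩)⟩

section NarrowTopGap

variable {α : Type*} [AddCommMonoid α] [LinearOrder α] [IsOrderedCancelAddMonoid α]

/-- Index-free form of the first alternative of `HyperMonolithic`: `s₀ > s₁` are the two largest
elements of `S`, and `s₀ - s₁ < x - y` whenever `y < x ≤ s₁` in `S`. -/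
def HasNarrowTopGap (S : Finset α) : Prop :=
  ∃ s₀ ∈ S, ∃ s₁ ∈ S, s₁ < s₀ ∧ (∀ s ∈ S, s ≠ s₀ → s ≤ s₁) ∧
    ∀ x ∈ S, ∀ y ∈ S, y < x → x ≤ s₁ → s₀ + y < x + s₁

theorem not_hasNarrowTopGap_add_of_le [DecidableEq α] {A B : Finset α} {a₀ a₁ b₀ b₁ : α}
    (ha₀ : a₀ ∈ A) (ha₁ : a₁ ∈ A) (ha : a₁ < a₀) (hA : ∀ a ∈ A, a ≠ a₀ → a ≤ a₁)
    (hb₀ : b₀ ∈ B) (hb₁ : b₁ ∈ B) (hb : b₁ < b₀) (hB : ∀ b ∈ B, b ≠ b₀ → b ≤ b₁)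
    (hgap : a₀ + b₁ ≤ a₁ + b₀) : ¬ HasNarrowTopGap (A + B) := by
  rintro ⟨s₀, hs₀, s₁, hs₁, hs, hS, hgapS⟩
  have le_a₀ : ∀ a ∈ A, a ≤ a₀ := fun a ha' =>
    (eq_or_ne a a₀).elim le_of_eq fun h => (hA a ha' h).trans ha.le
  have le_b₀ : ∀ b ∈ B, b ≤ b₀ := fun b hb' =>
    (eq_or_ne b b₀).elim le_of_eq fun h => (hB b hb' h).trans hb.le
  have le_second : ∀ a ∈ A, ∀ b ∈ B, a + b ≠ a₀ + b₀ → a + b ≤ a₁ + b₀ := by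
    intro a ha' b hb' hne
    rcases eq_or_ne a a₀ with rfl | h
    · exact (add_le_add le_rfl (hB b hb' (by rintro rfl; exact hne rfl))).trans hgap
    · exact add_le_add (hA a ha' h) (le_b₀ b hb')
  have hs₀_eq : s₀ = a₀ + b₀ := by
    obtain ⟨a, ha', b, hb', rfl⟩ := mem_add.1 hs₀
    by_contra hne
    have := hS _ (add_mem_add ha₀ hb₀) (Ne.symm hne)
    exact (add_le_add (le_a₀ a ha') (le_b₀ b hb')).not_gt (this.trans_lt hs)
  have hs₁_le : s₁ ≤ a₁ + b₀ := by
    obtain ⟨a, ha', b, hb', rfl⟩ := mem_add.1 hs₁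
    exact le_second a ha' b hb' (hs₀_eq ▸ hs.ne)
  have le_hs₁ : a₁ + b₀ ≤ s₁ :=
    hS _ (add_mem_add ha₁ hb₀) (hs₀_eq ▸ (add_lt_add_of_lt_of_le ha le_rfl).ne)
  have := hgapS _ (add_mem_add ha₀ hb₁) _ (add_mem_add ha₁ hb₁)
    (add_lt_add_of_lt_of_le ha le_rfl) (hgap.trans le_hs₁)
  rw [hs₀_eq] at this
  exact (this.trans_le (add_le_add le_rfl hs₁_le)).ne (by abel)

theorem not_hasNarrowTopGap_add [DecidableEq α] {A B : Finset α} (hA : A.Nontrivial)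
    (hB : B.Nontrivial) : ¬ HasNarrowTopGap (A + B) := by
  obtain ⟨a₀, ha₀, a₁, ha₁, ha, hA⟩ := hA.exists_top_two
  obtain ⟨b₀, hb₀, b₁, hb₁, hb, hB⟩ := hB.exists_top_two
  rcases le_total (a₀ + b₁) (a₁ + b₀) with hgap | hgap
  · exact not_hasNarrowTopGap_add_of_le ha₀ ha₁ ha hA hb₀ hb₁ hb hB hgap
  · rw [add_comm]
    exact not_hasNarrowTopGap_add_of_le hb₀ hb₁ hb hB ha₀ ha₁ ha hA
      (by rwa [add_comm, add_comm b₁])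

theorem hasNarrowTopGap_image_range [DecidableEq α] {k : ℕ → α} {n : ℕ} (hn : 1 ≤ n)
    (hk : StrictAntiOn k (Set.Iic n))
    (hgap : ∀ i, 1 ≤ i → i + 1 ≤ n → k 0 + k (i + 1) < k i + k 1) :
    HasNarrowTopGap ((range (n + 1)).image k) := by
  have mem : ∀ {i}, i ≤ n → k i ∈ (range (n + 1)).image k := fun hi =>
    mem_image_of_mem k (mem_range.2 (Nat.lt_succ_of_le hi))
  have h₀ : 0 ∈ Set.Iic n := Set.mem_Iic.2 n.zero_le
  have h₁ : 1 ∈ Set.Iic n := Set.mem_Iic.2 hn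
  refine ⟨k 0, mem n.zero_le, k 1, mem hn, hk h₀ h₁ zero_lt_one, ?_, ?_⟩
  · simp only [forall_mem_image, mem_range, Nat.lt_succ_iff]
    intro i hi hne
    exact hk.antitoneOn h₁ hi (Nat.one_le_iff_ne_zero.2 (by rintro rfl; exact hne rfl))
  · simp only [forall_mem_image, mem_range, Nat.lt_succ_iff]
    intro i hi j hj hji hi₁
    have hij : i < j := (hk.lt_iff_gt hj hi).1 hji
    have h₁i : 1 ≤ i := Nat.one_le_iff_ne_zero.2 <| by
      rintro rfl; exact (hk h₀ h₁ zero_lt_one).not_ge hi₁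
    calc k 0 + k j
        ≤ k 0 + k (i + 1) := add_le_add le_rfl (hk.antitoneOn (Set.mem_Iic.2 (by omega)) hj hij)
      _ < k i + k 1 := hgap i h₁i (by omega)

theorem hasNarrowTopGap_toDual_image_range [DecidableEq α] {k : ℕ → α} {n : ℕ} (hn : 1 ≤ n)
    (hk : StrictAntiOn k (Set.Iic n))
    (hgap : ∀ j, j + 2 ≤ n → k (n - 1) + k (j + 1) < k j + k n) :
    HasNarrowTopGap ((range (n + 1)).image (OrderDual.toDual ∘ k)) := by
  have hrefl : (range (n + 1)).image (fun i => OrderDual.toDual (k (n - i))) =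
      (range (n + 1)).image (OrderDual.toDual ∘ k) := by
    conv_rhs => rw [← range_image_pred_top_sub (n + 1), image_image, Nat.add_sub_cancel]
    rfl
  rw [← hrefl]
  refine hasNarrowTopGap_image_range hn (fun i hi j hj hij => hk ?_ ?_ ?_) fun i h₁ h₂ => ?_
  · exact Set.mem_Iic.2 (n.sub_le j)
  · exact Set.mem_Iic.2 (n.sub_le i)
  · exact Nat.sub_lt_sub_left (lt_of_lt_of_le hij (Set.mem_Iic.1 hj)) hij
  · have := hgap (n - (i + 1)) (by omega)
    rw [show n - (i + 1) + 1 = n - i by omega, add_comm (k (n - 1)), add_comm (k (n - (i + 1)))]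
      at this
    rw [Nat.sub_zero]
    exact this -- `<` on `αᵒᵈ` is `>` on `α`

end NarrowTopGap

/-- Every hyper-monolithic Laurent polynomial is monolithic. -/
theorem stmt4 (f : NL) (hf : HyperMonolithic f) : Monolithic f := by
  obtain ⟨n, k, c, hn, hk, hc, hf, hgap⟩ := hf
  have hanti : StrictAntiOn k (Set.Iic n) := fun i _ j hj hij => hk i j hij hj
  have hsupp : f.coeff.support = (range (n + 1)).image k :=
    hf ▸ support_coeff_sum_mono _ k c fun i hi => hc i (Nat.lt_succ_iff.1 (mem_range.1 hi))
  have hf₀ : f ≠ 0 := by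
    rintro rfl
    simp at hsupp
  refine ⟨hf₀, fun g h hgh => ?_⟩
  by_contra! ⟨hg, hh⟩
  have hA := support_coeff_nontrivial_of_not_isMonomial (left_ne_zero_of_mul (hgh ▸ hf₀)) hg
  have hB := support_coeff_nontrivial_of_not_isMonomial (right_ne_zero_of_mul (hgh ▸ hf₀)) hh
  rw [hgh, AddMonoidAlgebra.support_coeff_mul_eq_add] at hsupp
  rcases hgap with hgap | hgap
  · exact not_hasNarrowTopGap_add hA hB <| hsupp ▸
      hasNarrowTopGap_image_range hn hanti fun i h₁ h₂ => by linarith [hgap i h₁ h₂]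
  · exact not_hasNarrowTopGap_add (α := ℤᵒᵈ) hA hB <| hsupp ▸
      hasNarrowTopGap_toDual_image_range hn hanti fun j hj => by linarith [hgap j hj]
end

section
/- Let Δ_0, …, Δ_n be a finite sequence of positive integers with n ≥ 1. Then there exist indices α, β ∈ {0, …, n} such that: (1) α < β; (2) Δ_j > max(Δ_α, Δ_β) for every j ∈ {0, …, α−1} ∪ {β+1, …, n}; and (3) there is at most one index t ∈ {α, …, β} with Δ_t < max(Δ_α, Δ_β). -/
/-!
Let `q` realise the second smallest value `m` of `Δ` (counted with multiplicity), so that only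
the minimiser `p` lies strictly below `m`. Take `α` and `β` to be the first and last index of the
sublevel set `{i | Δ i ≤ m}`, which contains `p ≠ q`. Every index outside `[α, β]` has value `> m`,
and `max (Δ α) (Δ β) = m` because `α` and `β` cannot both equal `p`.
-/

open Finset

theorem Finset.exists_ne_forall_le_of_one_lt_card {ι α : Type*} [LinearOrder α] {s : Finset ι}
    (hs : 1 < #s) (f : ι → α) :
    ∃ p ∈ s, ∃ q ∈ s, p ≠ q ∧ f p ≤ f q ∧ ∀ i ∈ s, i ≠ p → f q ≤ f i := by
  classical
  obtain ⟨p, hp, hp_min⟩ := s.exists_min_image f (card_pos.1 (by omega))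
  have hs' : (s.erase p).Nonempty := card_pos.1 (by rw [card_erase_of_mem hp]; omega)
  obtain ⟨q, hq, hq_min⟩ := (s.erase p).exists_min_image f hs'
  obtain ⟨hqp, hqs⟩ := mem_erase.1 hq
  exact ⟨p, hp, q, hqs, hqp.symm, hp_min q hqs,
    fun i hi hip => hq_min i (mem_erase.2 ⟨hip, hi⟩)⟩

theorem Finset.exists_lt_forall_lt_max_of_one_lt_card {ι α : Type*} [LinearOrder ι]
    [LinearOrder α] {s : Finset ι} (hs : 1 < #s) (f : ι → α) :
    ∃ a ∈ s, ∃ b ∈ s, a < b ∧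
      (∀ j ∈ s, (j < a ∨ b < j) → max (f a) (f b) < f j) ∧
      (∀ t₁ ∈ s, ∀ t₂ ∈ s, f t₁ < max (f a) (f b) → f t₂ < max (f a) (f b) → t₁ = t₂) := by
  obtain ⟨p, hp, q, hq, hpq, hpq_le, hq_le⟩ := s.exists_ne_forall_le_of_one_lt_card hs f
  have eq_of_lt : ∀ t ∈ s, f t < f q → t = p := fun t ht hlt =>
    by_contra fun htp => (hq_le t ht htp).not_gt hlt
  set A := s.filter (f · ≤ f q)
  have hpA : p ∈ A := mem_filter.2 ⟨hp, hpq_le⟩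
  have hqA : q ∈ A := mem_filter.2 ⟨hq, le_rfl⟩
  set a := A.min' ⟨p, hpA⟩
  set b := A.max' ⟨p, hpA⟩
  obtain ⟨ha, hfa⟩ := mem_filter.1 (A.min'_mem ⟨p, hpA⟩)
  obtain ⟨hb, hfb⟩ := mem_filter.1 (A.max'_mem ⟨p, hpA⟩)
  have hab : a < b := A.min'_lt_max' hpA hqA hpq
  have hmax : max (f a) (f b) = f q := by
    refine le_antisymm (max_le hfa hfb) (le_max_iff.2 ?_)
    by_contra! h
    exact hab.ne ((eq_of_lt a ha h.1).trans (eq_of_lt b hb h.2).symm)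
  refine ⟨a, ha, b, hb, hab, fun j hj hout => ?_, fun t₁ ht₁ t₂ ht₂ h₁ h₂ => ?_⟩
  · rw [hmax]
    by_contra! hjq
    have hjA : j ∈ A := mem_filter.2 ⟨hj, hjq⟩
    rcases hout with hja | hbj
    · exact (A.min'_le j hjA).not_gt hja
    · exact (A.le_max' j hjA).not_gt hbj
  · rw [hmax] at h₁ h₂
    exact (eq_of_lt t₁ ht₁ h₁).trans (eq_of_lt t₂ ht₂ h₂).symm

theorem stmt6_general (n : ℕ) (hn : 1 ≤ n) (Δ : ℕ → ℕ) :
    ∃ α β : ℕ, α ≤ n ∧ β ≤ n ∧ α < β ∧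
      (∀ j, j ≤ n → (j < α ∨ β < j) → max (Δ α) (Δ β) < Δ j) ∧
      (∀ t₁ t₂, α ≤ t₁ → t₁ ≤ β → α ≤ t₂ → t₂ ≤ β →
        Δ t₁ < max (Δ α) (Δ β) → Δ t₂ < max (Δ α) (Δ β) → t₁ = t₂) := by
  have hcard : 1 < #(range (n + 1)) := by rw [card_range]; omega
  obtain ⟨α, hα, β, hβ, hαβ, h_out, h_low⟩ :=
    exists_lt_forall_lt_max_of_one_lt_card hcard Δ
  rw [mem_range_succ_iff] at hα hβ
  refine ⟨α, β, hα, hβ, hαβ, fun j hj => h_out j (mem_range_succ_iff.2 hj), ?_⟩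
  intro t₁ t₂ _ h₁ _ h₂
  exact h_low t₁ (mem_range_succ_iff.2 (h₁.trans hβ)) t₂ (mem_range_succ_iff.2 (h₂.trans hβ))

/-- The splitting-configuration lemma for finite sequences of positive integers. -/
theorem stmt6 (n : ℕ) (hn : 1 ≤ n) (Δ : ℕ → ℕ) (hΔ : ∀ i, i ≤ n → 0 < Δ i) :
    ∃ α β : ℕ, α ≤ n ∧ β ≤ n ∧ α < β ∧
      (∀ j, j ≤ n → (j < α ∨ β < j) → max (Δ α) (Δ β) < Δ j) ∧
      (∀ t₁ t₂, α ≤ t₁ → t₁ ≤ β → α ≤ t₂ → t₂ ≤ β →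
        Δ t₁ < max (Δ α) (Δ β) → Δ t₂ < max (Δ α) (Δ β) → t₁ = t₂) :=
  stmt6_general n hn Δ
end

section
/- Let f ∈ ℕ[x^{±1}] with |supp(f)| ≥ 3. Then f can be written as f = g + h where g, h ∈ ℕ[x^{±1}], g is hyper-monolithic, and h(1) ≤ g(1). -/
/-!
Index the exponents of `f` decreasingly, `k 0 > k 1 > ⋯`, and call the edge `u` (joining the
indices `u` and `u + 1`) minimal if its gap `k u - k (u + 1)` is as small as possible. Two
exponents that are not joined by a minimal edge differ by strictly more than a minimal gap, so a
set of exponents containing exactly one minimal edge, sitting at its top or at its bottom, is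
hyper-monolithic. The indices split into two such sets `T₁ ∪ T₂`: colour them alternately,
switching after every minimal edge, let `T₁` be one colour class together with the lower end of
the first minimal edge and `T₂` the other class together with the upper end of the last one.
This needs the colours to come out right after the last minimal edge, which an extra switch at a
non-minimal edge between the first and the last minimal edge repairs; if there is none, the
minimal edges form an interval and explicit alternating sets do the job. Taking for `g` the
heavier of the two parts of `f` leaves `h(1) ≤ g(1)`.
-/

open Finset

theorem Finset.exists_strictAntiOn_image_range_eq {α : Type*} [LinearOrder α] [Inhabited α]
    (S : Finset α) : ∃ k : ℕ → α, StrictAntiOn k (Set.Iio #S) ∧ (range #S).image k = S := by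
  induction S using Finset.induction_on_max with
  | empty => exact ⟨fun _ => default, by simp [StrictAntiOn], by simp⟩
  | insert a S hlt ih =>
    obtain ⟨k, hk, hkS⟩ := ih
    have ha : a ∉ S := fun h => lt_irrefl a (hlt a h)
    refine ⟨fun i => if i = 0 then a else k (i - 1), ?_, ?_⟩
    · rw [card_insert_of_notMem ha]
      intro i hi j hj hij
      simp only [Set.mem_Iio] at hi hj
      have hj0 : j ≠ 0 := by omega
      simp only [hj0, if_false]
      rcases Nat.eq_zero_or_pos i with rfl | hi0
      · simpa using hlt _ (hkS ▸ mem_image_of_mem k (mem_range.2 (by omega)))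
      · simp only [hi0.ne', if_false]
        exact hk (by simp; omega) (by simp; omega) (by omega)
    · rw [card_insert_of_notMem ha, range_add_one', image_insert, map_eq_image, image_image]
      rw [if_pos rfl]
      conv_rhs => rw [← hkS]
      congr 2

theorem evalOne_sum_mono (S : Finset ℤ) (c : ℤ → ℕ) :
    evalOne (∑ x ∈ S, mono x (c x)) = ∑ x ∈ S, c x := by
  simp only [evalOne, mono, AddMonoidAlgebra.coeff_sum, AddMonoidAlgebra.coeff_single]
  rw [← Finsupp.sum_finsetSum_index (fun _ => rfl) (fun _ _ _ => rfl)]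
  exact sum_congr rfl fun x _ => Finsupp.sum_single_index rfl

theorem sum_mono_coeff (f : NL) : ∑ x ∈ f.coeff.support, mono x (f.coeff x) = f := by
  conv_rhs => rw [← f.sum_coeff_single]
  rfl

theorem hyperMonolithic_sum_mono_of_strictAntiOn {S : Finset ℤ} {c : ℤ → ℕ}
    (hc : ∀ x ∈ S, 0 < c x) (hcard : 2 ≤ #S) {k : ℕ → ℤ} (hk : StrictAntiOn k (Set.Iio #S))
    (hkS : (range #S).image k = S)
    (hgap : (∀ i, 1 ≤ i → i + 2 ≤ #S → k 0 - k 1 < k i - k (i + 1)) ∨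
      (∀ j, j + 3 ≤ #S → k (#S - 2) - k (#S - 1) < k j - k (j + 1))) :
    HyperMonolithic (∑ x ∈ S, mono x (c x)) := by
  have hsum : ∑ x ∈ S, mono x (c x) = ∑ i ∈ range #S, mono (k i) (c (k i)) := by
    conv_lhs => rw [← hkS]
    exact sum_image (by simpa using hk.injOn)
  refine ⟨#S - 1, k, c ∘ k, by omega, fun i j hij hj => hk (by simp; omega) (by simp; omega) hij,
    fun i hi => hc _ (hkS ▸ mem_image_of_mem k (mem_range.2 (by omega))), ?_, ?_⟩
  · rw [Nat.sub_add_cancel (by omega), hsum]; rfl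
  · rcases hgap with h | h
    · exact Or.inl fun i hi hin => h i hi (by omega)
    · refine Or.inr fun j hj => ?_
      rw [show #S - 1 - 1 = #S - 2 by omega]
      exact h j (by omega)

theorem hyperMonolithic_of_top_gap_lt {S : Finset ℤ} {c : ℤ → ℕ} (hc : ∀ x ∈ S, 0 < c x)
    {a b : ℤ} (ha : a ∈ S) (hb : b ∈ S) (hba : b < a) (hmax : ∀ x ∈ S, x ≤ a)
    (hgap : ∀ y ∈ S, ∀ z ∈ S, z < y → y < a → a - b < y - z) :
    HyperMonolithic (∑ x ∈ S, mono x (c x)) := by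
  obtain ⟨k, hk, hkS⟩ := S.exists_strictAntiOn_image_range_eq
  have hcard : 2 ≤ #S := one_lt_card.2 ⟨a, ha, b, hb, hba.ne'⟩
  have hmem : ∀ i < #S, k i ∈ S := fun i hi => hkS ▸ mem_image_of_mem k (mem_range.2 hi)
  have hsurj : ∀ x ∈ S, ∃ i < #S, k i = x := fun x hx => by
    rw [← hkS] at hx; simpa using hx
  have hlt : ∀ {i j}, i < j → j < #S → k j < k i := fun hij hj =>
    hk (Set.mem_Iio.2 (hij.trans hj)) (Set.mem_Iio.2 hj) hij
  have hanti : ∀ i j, i ≤ j → j < #S → k j ≤ k i := fun i j hij hj =>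
    hk.antitoneOn (Set.mem_Iio.2 (by omega)) (Set.mem_Iio.2 hj) hij
  have hk0 : k 0 = a := by
    obtain ⟨j, hj, rfl⟩ := hsurj a ha
    exact le_antisymm (hmax _ (hmem 0 (by omega))) (hanti 0 j (Nat.zero_le j) hj)
  have hk1 : b ≤ k 1 := by
    obtain ⟨j, hj, rfl⟩ := hsurj b hb
    refine hanti 1 j (Nat.pos_of_ne_zero ?_) hj
    rintro rfl
    exact hba.ne hk0
  refine hyperMonolithic_sum_mono_of_strictAntiOn hc hcard hk hkS (Or.inl fun i hi hin => ?_)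
  have := hgap _ (hmem i (by omega)) _ (hmem (i + 1) (by omega)) (hlt (by omega) (by omega))
    (hk0 ▸ hlt (by omega) (by omega))
  linarith

theorem hyperMonolithic_of_bottom_gap_lt {S : Finset ℤ} {c : ℤ → ℕ} (hc : ∀ x ∈ S, 0 < c x)
    {a b : ℤ} (ha : a ∈ S) (hb : b ∈ S) (hba : b < a) (hmin : ∀ x ∈ S, b ≤ x)
    (hgap : ∀ y ∈ S, ∀ z ∈ S, z < y → b < z → a - b < y - z) :
    HyperMonolithic (∑ x ∈ S, mono x (c x)) := by
  obtain ⟨k, hk, hkS⟩ := S.exists_strictAntiOn_image_range_eq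
  have hcard : 2 ≤ #S := one_lt_card.2 ⟨a, ha, b, hb, hba.ne'⟩
  have hmem : ∀ i < #S, k i ∈ S := fun i hi => hkS ▸ mem_image_of_mem k (mem_range.2 hi)
  have hsurj : ∀ x ∈ S, ∃ i < #S, k i = x := fun x hx => by
    rw [← hkS] at hx; simpa using hx
  have hlt : ∀ {i j}, i < j → j < #S → k j < k i := fun hij hj =>
    hk (Set.mem_Iio.2 (hij.trans hj)) (Set.mem_Iio.2 hj) hij
  have hanti : ∀ i j, i ≤ j → j < #S → k j ≤ k i := fun i j hij hj =>
    hk.antitoneOn (Set.mem_Iio.2 (by omega)) (Set.mem_Iio.2 hj) hij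
  have hlast : k (#S - 1) = b := by
    obtain ⟨j, hj, rfl⟩ := hsurj b hb
    exact le_antisymm (hanti j _ (by omega) (by omega)) (hmin _ (hmem _ (by omega)))
  have hpen : k (#S - 2) ≤ a := by
    obtain ⟨j, hj, rfl⟩ := hsurj a ha
    refine hanti j _ ?_ (by omega)
    by_contra hlt
    have : j = #S - 1 := by omega
    exact hba.ne (this ▸ hlast).symm
  refine hyperMonolithic_sum_mono_of_strictAntiOn hc hcard hk hkS (Or.inr fun j hj => ?_)
  have := hgap _ (hmem j (by omega)) _ (hmem (j + 1) (by omega)) (hlt (by omega) (by omega))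
    (hlast ▸ hlt (by omega) (by omega))
  linarith

def UniqueBottomEdge (E T : Finset ℕ) (a : ℕ) : Prop :=
  a ∈ E ∧ a ∈ T ∧ a + 1 ∈ T ∧ (∀ i ∈ T, a ≤ i) ∧ ∀ u ∈ E, u ∈ T → u + 1 ∈ T → u = a

def UniqueTopEdge (E T : Finset ℕ) (b : ℕ) : Prop :=
  b ∈ E ∧ b ∈ T ∧ b + 1 ∈ T ∧ (∀ i ∈ T, i ≤ b + 1) ∧ ∀ u ∈ E, u ∈ T → u + 1 ∈ T → u = b

def IsAnchoredSplit (n : ℕ) (E T₁ T₂ : Finset ℕ) : Prop :=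
  T₁ ∪ T₂ = range n ∧ (∃ a, UniqueBottomEdge E T₁ a) ∧ ∃ b, UniqueTopEdge E T₂ b

def switchColor (F : Finset ℕ) : ℕ → Bool
  | 0 => false
  | i + 1 => switchColor F i ^^ decide (i ∈ F)

theorem switchColor_succ (F : Finset ℕ) (i : ℕ) :
    switchColor F (i + 1) = (switchColor F i ^^ decide (i ∈ F)) := rfl

theorem switchColor_eq_false {F : Finset ℕ} {i : ℕ} (h : ∀ u ∈ F, i ≤ u) :
    switchColor F i = false := by
  induction i with
  | zero => rfl
  | succ i ih =>
    have hi : i ∉ F := fun hi => by have := h i hi; omega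
    rw [switchColor_succ, ih fun u hu => by have := h u hu; omega]
    simp [hi]

theorem switchColor_eq_of_le {F : Finset ℕ} {i j : ℕ} (h : ∀ u ∈ F, u < j) (hji : j ≤ i) :
    switchColor F i = switchColor F j := by
  induction i, hji using Nat.le_induction with
  | base => rfl
  | succ i hji ih =>
    have hi : i ∉ F := fun hi => by have := h i hi; omega
    rw [switchColor_succ, ih]
    simp [hi]

theorem switchColor_insert {F : Finset ℕ} {m : ℕ} (hm : m ∉ F) (i : ℕ) :
    switchColor (insert m F) i = (switchColor F i ^^ decide (m < i)) := by
  induction i with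
  | zero => rfl
  | succ i ih =>
    rw [switchColor_succ, switchColor_succ, ih]
    by_cases him : i = m
    · subst him; simp [hm]
    · have : m < i + 1 ↔ m < i := by omega
      simp only [him, this, mem_insert, false_or]
      exact Bool.xor_right_comm _ _ _

theorem exists_isAnchoredSplit_of_switchColor {n p q : ℕ} {E F : Finset ℕ} (hpE : p ∈ E)
    (hqE : q ∈ E) (hEF : E ⊆ F) (hF : ∀ u ∈ F, p ≤ u ∧ u ≤ q) (hqn : q + 1 < n)
    (hq : switchColor F (q + 1) = true) : ∃ T₁ T₂, IsAnchoredSplit n E T₁ T₂ := by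
  have hlow : ∀ i ≤ p, switchColor F i = false := fun i hi =>
    switchColor_eq_false fun u hu => (hF u hu).1.trans' hi
  have hhigh : ∀ i, q + 1 ≤ i → switchColor F i = true := fun i hi =>
    (switchColor_eq_of_le (fun u hu => Nat.lt_succ_of_le (hF u hu).2) hi).trans hq
  have hflip : ∀ u ∈ E, switchColor F (u + 1) = !switchColor F u := fun u hu => by
    simp [switchColor_succ, hEF hu]
  refine ⟨(range n).filter fun i => i = p ∨ switchColor F i = true,
    (range n).filter fun i => i = q + 1 ∨ switchColor F i = false, ?_, ⟨p, ?_⟩, ⟨q, ?_⟩⟩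
  · ext i; simp only [mem_union, mem_filter, mem_range]; cases switchColor F i <;> tauto
  · have hpq := (hF p (hEF hpE)).2
    refine ⟨hpE, mem_filter.2 ⟨mem_range.2 (by omega), Or.inl rfl⟩,
      mem_filter.2 ⟨mem_range.2 (by omega), Or.inr (by simp [hflip p hpE, hlow p le_rfl])⟩,
      fun i hi => ?_, fun u hu hu₁ hu₂ => ?_⟩
    · by_contra hip
      rcases (mem_filter.1 hi).2 with rfl | hi
      · exact hip le_rfl
      · simp [hlow i (by omega)] at hi
    · have hpu := (hF u (hEF hu)).1
      rcases (mem_filter.1 hu₁).2 with h | h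
      · exact h
      rcases (mem_filter.1 hu₂).2 with h' | h'
      · omega
      · simp [hflip u hu, h] at h'
  · have hpq := (hF q (hEF hqE)).1
    refine ⟨hqE, mem_filter.2 ⟨mem_range.2 (by omega), Or.inr ?_⟩,
      mem_filter.2 ⟨mem_range.2 hqn, Or.inl rfl⟩, fun i hi => ?_, fun u hu hu₁ hu₂ => ?_⟩
    · simpa [hflip q hqE] using hq
    · by_contra hiq
      rcases (mem_filter.1 hi).2 with rfl | hi
      · exact hiq le_rfl
      · simp [hhigh i (by omega)] at hi
    · have huq := (hF u (hEF hu)).2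
      rcases (mem_filter.1 hu₂).2 with h | h
      · omega
      rcases (mem_filter.1 hu₁).2 with h' | h'
      · omega
      · simp [hflip u hu, h'] at h

theorem exists_isAnchoredSplit_of_Icc {n p q : ℕ} {E : Finset ℕ}
    (hE : ∀ u, u ∈ E ↔ p ≤ u ∧ u ≤ q) (hpq : p ≤ q) (hqn : q + 1 < n) :
    ∃ T₁ T₂, IsAnchoredSplit n E T₁ T₂ := by
  -- `E` consists of `q - p + 1` edges: an odd number, two, or an even number at least four
  have hcases : (q - p) % 2 = 0 ∨ q = p + 1 ∨ (p + 3 ≤ q ∧ (q - p) % 2 = 1) := by omega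
  rcases hcases with hpar | hq | ⟨hq, hpar⟩ <;>
  [refine ⟨(range n).filter fun i => i = p ∨ q + 1 < i ∨ (i - p) % 2 = 1,
      (range n).filter fun i => i = q + 1 ∨ (i ≤ q ∧ (i - p) % 2 = 0), ?_, ⟨p, ?_⟩, ⟨q, ?_⟩⟩;
    refine ⟨(range n).filter fun i => i = p ∨ i = p + 1 ∨ p + 3 ≤ i,
      (range n).filter fun i => i < p ∨ i = p + 1 ∨ i = p + 2, ?_, ⟨p, ?_⟩, ⟨q, ?_⟩⟩;
    refine ⟨(range n).filter fun i => i = p + 1 ∨ q + 1 < i ∨ (p < i ∧ i ≤ q ∧ (i - p) % 2 = 0),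
      (range n).filter fun i => i ≤ p ∨ i = q + 1 ∨ (p + 3 ≤ i ∧ i ≤ q ∧ (i - p) % 2 = 1),
      ?_, ⟨p + 1, ?_⟩, ⟨q, ?_⟩⟩]
  all_goals first
    | ext i; simp only [mem_union, mem_filter, mem_range]; omega
    | simp only [UniqueBottomEdge, UniqueTopEdge, hE, mem_filter, mem_range, true_or, or_true,
        and_true]
      and_intros <;> intros <;> omega

theorem exists_isAnchoredSplit {n : ℕ} {E : Finset ℕ} (hE : E.Nonempty)
    (hEn : ∀ u ∈ E, u + 1 < n) : ∃ T₁ T₂, IsAnchoredSplit n E T₁ T₂ := by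
  set p := E.min' hE
  set q := E.max' hE
  have hpE : p ∈ E := E.min'_mem hE
  have hqE : q ∈ E := E.max'_mem hE
  have hbounds : ∀ u ∈ E, p ≤ u ∧ u ≤ q := fun u hu => ⟨E.min'_le u hu, E.le_max' u hu⟩
  by_cases hgap : ∃ m, p < m ∧ m < q ∧ m ∉ E
  · obtain ⟨m, hpm, hmq, hmE⟩ := hgap
    cases hcol : switchColor E (q + 1)
    · refine exists_isAnchoredSplit_of_switchColor hpE hqE (subset_insert m E) ?_ (hEn q hqE) ?_
      · intro u hu
        rcases mem_insert.1 hu with rfl | hu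
        · omega
        · exact hbounds u hu
      · simp [switchColor_insert hmE, hcol]; omega
    · exact exists_isAnchoredSplit_of_switchColor hpE hqE subset_rfl hbounds (hEn q hqE) hcol
  · push Not at hgap
    refine exists_isAnchoredSplit_of_Icc (fun u => ⟨hbounds u, fun ⟨hpu, huq⟩ => ?_⟩)
      (hbounds p hpE).2 (hEn q hqE)
    by_contra huE
    rcases hpu.eq_or_lt with rfl | hpu
    · exact huE hpE
    rcases huq.eq_or_lt with rfl | huq
    · exact huE hqE
    exact huE (hgap u hpu huq)

def minGapEdges (k : ℕ → ℤ) (n : ℕ) : Finset ℕ :=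
  {u ∈ range (n - 1) | ∀ v ∈ range (n - 1), k u - k (u + 1) ≤ k v - k (v + 1)}

section MinGapEdges

variable {k : ℕ → ℤ} {n : ℕ}

theorem mem_minGapEdges {u : ℕ} :
    u ∈ minGapEdges k n ↔ u + 1 < n ∧ ∀ v, v + 1 < n → k u - k (u + 1) ≤ k v - k (v + 1) := by
  simp only [minGapEdges, mem_filter, mem_range]
  exact and_congr (by omega) (forall_congr' fun v => imp_congr_left (by omega))

theorem minGapEdges_nonempty (hn : 2 ≤ n) : (minGapEdges k n).Nonempty := by
  obtain ⟨u, hu, hmin⟩ := exists_min_image (range (n - 1)) (fun u => k u - k (u + 1))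
    ⟨0, mem_range.2 (by omega)⟩
  exact ⟨u, mem_filter.2 ⟨hu, hmin⟩⟩

theorem gap_lt_of_mem_minGapEdges (hk : StrictAntiOn k (Set.Iio n)) {a u v : ℕ}
    (ha : a ∈ minGapEdges k n) (huv : u < v) (hv : v < n)
    (hedge : v = u + 1 → u ∉ minGapEdges k n) : k a - k (a + 1) < k u - k v := by
  have hmin := (mem_minGapEdges.1 ha).2
  rcases (Nat.succ_le_of_lt huv).eq_or_lt with rfl | hlt
  · have : ¬∀ w, w + 1 < n → k u - k (u + 1) ≤ k w - k (w + 1) := fun h =>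
      hedge rfl (mem_minGapEdges.2 ⟨hv, h⟩)
    push Not at this
    obtain ⟨w, hw, hlt⟩ := this
    linarith [hmin w hw]
  · have : k v < k (u + 1) := hk (Set.mem_Iio.2 (by omega)) (Set.mem_Iio.2 hv) hlt
    linarith [hmin u (by omega)]

-- `k` is decreasing, so the bottom edge of `T` carries the top gap of the exponents `T.image k`.
theorem hyperMonolithic_of_uniqueBottomEdge (hk : StrictAntiOn k (Set.Iio n)) {c : ℤ → ℕ}
    {T : Finset ℕ} (hT : T ⊆ range n) (hc : ∀ x ∈ T.image k, 0 < c x) {a : ℕ}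
    (ha : UniqueBottomEdge (minGapEdges k n) T a) :
    HyperMonolithic (∑ x ∈ T.image k, mono x (c x)) := by
  obtain ⟨haE, haT, ha₁T, hmin, huniq⟩ := ha
  have hlt : ∀ {i j}, i ∈ T → j ∈ T → (k j < k i ↔ i < j) := fun hi hj =>
    hk.lt_iff_gt (by simpa using hT hj) (by simpa using hT hi)
  refine hyperMonolithic_of_top_gap_lt hc (mem_image_of_mem k haT) (mem_image_of_mem k ha₁T)
    ((hlt haT ha₁T).2 (Nat.lt_succ_self a)) ?_ ?_
  · simp only [mem_image]
    rintro _ ⟨i, hi, rfl⟩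
    exact not_lt.1 fun h => (hmin i hi).not_gt ((hlt hi haT).1 h)
  · simp only [mem_image]
    rintro _ ⟨u, hu, rfl⟩ _ ⟨v, hv, rfl⟩ hvu hua
    refine gap_lt_of_mem_minGapEdges hk haE ((hlt hu hv).1 hvu) (by simpa using hT hv) ?_
    rintro rfl huE
    exact ((hlt haT hu).1 hua).ne' (huniq u huE hu hv)

theorem hyperMonolithic_of_uniqueTopEdge (hk : StrictAntiOn k (Set.Iio n)) {c : ℤ → ℕ}
    {T : Finset ℕ} (hT : T ⊆ range n) (hc : ∀ x ∈ T.image k, 0 < c x) {b : ℕ}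
    (hb : UniqueTopEdge (minGapEdges k n) T b) :
    HyperMonolithic (∑ x ∈ T.image k, mono x (c x)) := by
  obtain ⟨hbE, hbT, hb₁T, hmax, huniq⟩ := hb
  have hlt : ∀ {i j}, i ∈ T → j ∈ T → (k j < k i ↔ i < j) := fun hi hj =>
    hk.lt_iff_gt (by simpa using hT hj) (by simpa using hT hi)
  refine hyperMonolithic_of_bottom_gap_lt hc (mem_image_of_mem k hbT) (mem_image_of_mem k hb₁T)
    ((hlt hbT hb₁T).2 (Nat.lt_succ_self b)) ?_ ?_
  · simp only [mem_image]
    rintro _ ⟨i, hi, rfl⟩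
    exact not_lt.1 fun h => (hmax i hi).not_gt ((hlt hb₁T hi).1 h)
  · simp only [mem_image]
    rintro _ ⟨u, hu, rfl⟩ _ ⟨v, hv, rfl⟩ hvu hbv
    refine gap_lt_of_mem_minGapEdges hk hbE ((hlt hu hv).1 hvu) (by simpa using hT hv) ?_
    rintro rfl huE
    exact ((hlt hv hb₁T).1 hbv).ne (by rw [huniq u huE hu hv])

end MinGapEdges

theorem exists_hyperMonolithic_add_of_union_eq (f : NL) {S₁ S₂ : Finset ℤ}
    (hS : S₁ ∪ S₂ = f.coeff.support) (h₁ : HyperMonolithic (∑ x ∈ S₁, mono x (f.coeff x)))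
    (h₂ : HyperMonolithic (∑ x ∈ S₂, mono x (f.coeff x))) :
    ∃ g h : NL, f = g + h ∧ HyperMonolithic g ∧ evalOne h ≤ evalOne g := by
  wlog hle : ∑ x ∈ S₂, f.coeff x ≤ ∑ x ∈ S₁, f.coeff x generalizing S₁ S₂
  · exact this (union_comm S₁ S₂ ▸ hS) h₂ h₁ (le_of_not_ge hle)
  have hsub : S₁ ⊆ f.coeff.support := hS ▸ subset_union_left
  refine ⟨_, ∑ x ∈ f.coeff.support \ S₁, mono x (f.coeff x), ?_, h₁, ?_⟩
  · rw [add_comm, sum_sdiff hsub, sum_mono_coeff]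
  · rw [evalOne_sum_mono, evalOne_sum_mono]
    refine le_trans (sum_le_sum_of_subset ?_) hle
    rw [← hS, union_sdiff_left]
    exact sdiff_subset

/-- Any `f` with at least three terms splits as `g + h` with `g` hyper-monolithic
and `h(1) ≤ g(1)`. -/
theorem stmt7 (f : NL) (hsupp : 3 ≤ f.coeff.support.card) :
    ∃ g h : NL, f = g + h ∧ HyperMonolithic g ∧ evalOne h ≤ evalOne g := by
  set S := f.coeff.support
  obtain ⟨k, hk, hkS⟩ := S.exists_strictAntiOn_image_range_eq
  obtain ⟨T₁, T₂, hT, ⟨a, ha⟩, ⟨b, hb⟩⟩ :=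
    exists_isAnchoredSplit (minGapEdges_nonempty (k := k) (n := #S) (by omega))
      fun u hu => (mem_minGapEdges.1 hu).1
  have hT₁ : T₁ ⊆ range #S := hT ▸ subset_union_left
  have hT₂ : T₂ ⊆ range #S := hT ▸ subset_union_right
  have hpos : ∀ T ⊆ range #S, ∀ x ∈ T.image k, 0 < f.coeff x := fun T hT x hx => by
    have hxS : x ∈ S := hkS ▸ image_subset_image hT hx
    exact Nat.pos_of_ne_zero (Finsupp.mem_support_iff.1 hxS)
  exact exists_hyperMonolithic_add_of_union_eq f (by rw [← image_union, hT, hkS])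
    (hyperMonolithic_of_uniqueBottomEdge hk hT₁ (hpos T₁ hT₁) ha)
    (hyperMonolithic_of_uniqueTopEdge hk hT₂ (hpos T₂ hT₂) hb)
end

section
/- For every integer k ≥ 2, the polynomial x^k + x^{k−1} + ⋯ + x ∈ ℕ[x] cannot be expressed as the sum of two irreducible elements of the semiring ℕ[x] of polynomials with nonnegative integer coefficients. -/
/-!
An irreducible `g ∈ ℕ[x]` with zero constant term is divisible by `x`, and since the only unit
of `ℕ[x]` is `1`, it equals `x`. The constant term of `x^k + ⋯ + x` vanishes, so both summands
would be `x`, whose sum `2x` has no `x^2` term, unlike `x^k + ⋯ + x` for `k ≥ 2`.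
-/

open Polynomial

namespace Polynomial

variable {R : Type*} [Semiring R] [NoZeroDivisors R]

theorem eq_one_of_isUnit [Subsingleton Rˣ] {p : R[X]} (hp : IsUnit p) : p = 1 := by
  obtain ⟨r, hr, rfl⟩ := isUnit_iff.1 hp
  rw [isUnit_iff_eq_one.1 hr, C_1]

theorem eq_X_of_irreducible_of_coeff_zero_eq_zero [Nontrivial R] [Subsingleton Rˣ] {g : R[X]}
    (hg : Irreducible g) (h0 : g.coeff 0 = 0) : g = X := by
  obtain ⟨u, rfl⟩ := X_dvd_iff.2 h0
  have hu : IsUnit u := (hg.isUnit_or_isUnit rfl).resolve_left not_isUnit_X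
  rw [eq_one_of_isUnit hu, mul_one]

end Polynomial

theorem Polynomial.coeff_sum_Icc_X_pow {R : Type*} [Semiring R] (k n : ℕ) :
    (∑ i ∈ Finset.Icc 1 k, (X : R[X]) ^ i).coeff n = if n ∈ Finset.Icc 1 k then 1 else 0 := by
  simp only [finsetSum_coeff, coeff_X_pow, Finset.sum_ite_eq]

/-- For every `k ≥ 2`, the polynomial `x^k + ⋯ + x ∈ ℕ[x]` is not a sum of two
irreducibles of the semiring of polynomials with nonnegative integer coefficients. -/
theorem stmt10 (k : ℕ) (hk : 2 ≤ k) :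
    ¬ ∃ g h : Polynomial ℕ, Irreducible g ∧ Irreducible h ∧
      (∑ i ∈ Finset.Icc 1 k, Polynomial.X ^ i) = g + h := by
  rintro ⟨g, h, hg, hh, hsum⟩
  have hcoeff (n : ℕ) : g.coeff n + h.coeff n = if n ∈ Finset.Icc 1 k then 1 else 0 := by
    rw [← coeff_add, ← hsum, coeff_sum_Icc_X_pow]
  obtain ⟨hg0, hh0⟩ : g.coeff 0 = 0 ∧ h.coeff 0 = 0 := by simpa using hcoeff 0
  have h2 := hcoeff 2
  rw [eq_X_of_irreducible_of_coeff_zero_eq_zero hg hg0,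
    eq_X_of_irreducible_of_coeff_zero_eq_zero hh hh0] at h2
  simp [coeff_X, hk] at h2
end

section
/- If f ∈ ℕ[x^{±1}] is hyper-monolithic and its coefficients c_0, …, c_n satisfy gcd(c_0, …, c_n) = 1, then f is irreducible in ℕ[x^{±1}]. -/
/-!
With nonnegative coefficients nothing cancels, so the support of `g * h` is the sumset of the
supports of `g` and `h`. If neither factor is a monomial, let `a₀ > a₁` and `b₀ > b₁` be the two
largest exponents of `g` and `h`, say with `a₀ - a₁ ≤ b₀ - b₁`. The first gap of `f` is then at
least `a₀ - a₁`, while `a₀ + b₁ > a₁ + b₁` are two exponents of `f` below the top one, so some later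
gap is at most `a₀ - a₁`. The last-gap condition reduces to this one under `x ↦ x⁻¹`. Finally, the
coefficient of a monomial factor divides every coefficient of `f`, so it is `1` and the factor is
a unit.
-/

open Finset
open scoped Pointwise

namespace AddMonoidAlgebra

theorem isUnit_single_one {R G : Type*} [Semiring R] [AddGroup G] (g : G) :
    IsUnit (single g (1 : R)) :=
  (Group.isUnit (Multiplicative.ofAdd g)).map (of R G)

variable {R G : Type*} [CommSemiring R] [PartialOrder R] [CanonicallyOrderedAdd R]

theorem support_coeff_mul [NoZeroDivisors R] [AddMonoid G] [DecidableEq G]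
    (x y : AddMonoidAlgebra R G) :
    (x * y).coeff.support = x.coeff.support + y.coeff.support := by
  refine (support_coeff_mul_subset x y).antisymm fun m hm => ?_
  obtain ⟨a, ha, b, hb, rfl⟩ := mem_add.1 hm
  rw [Finsupp.mem_support_iff] at ha hb ⊢
  rw [coeff_mul, Finsupp.sum, Ne, sum_eq_zero_iff, not_forall]
  refine ⟨a, fun h => ?_⟩
  rw [Finsupp.sum, sum_eq_zero_iff] at h
  have := h (Finsupp.mem_support_iff.2 ha) b (Finsupp.mem_support_iff.2 hb)
  simp_all

theorem support_coeff_sum_single {ι : Type*} [DecidableEq G] (s : Finset ι) (k : ι → G)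
    (c : ι → R) (hc : ∀ i ∈ s, c i ≠ 0) :
    (∑ i ∈ s, single (k i) (c i)).coeff.support = s.image k := by
  ext m
  simp only [coeff_sum, coeff_single, Finsupp.mem_support_iff, Finsupp.coe_finsetSum,
    Finset.sum_apply, Finsupp.single_apply, Ne, sum_eq_zero_iff, mem_image, not_forall]
  grind

theorem not_isUnit_of_one_lt_card_support [NoZeroDivisors R] [Nontrivial R] [AddCancelMonoid G]
    {x : AddMonoidAlgebra R G} (hx : 1 < x.coeff.support.card) : ¬IsUnit x := by
  classical
  rintro ⟨u, rfl⟩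
  have hsupp : (u : AddMonoidAlgebra R G).coeff.support
      + (↑u⁻¹ : AddMonoidAlgebra R G).coeff.support = {0} := by
    rw [← support_coeff_mul, u.mul_inv, one_def, coeff_single, Finsupp.support_single _ one_ne_zero]
  have hne : (↑u⁻¹ : AddMonoidAlgebra R G).coeff.support.Nonempty := by
    rw [Finsupp.support_nonempty_iff, Ne, coeff_eq_zero]
    exact u⁻¹.ne_zero
  have := card_le_card_add_right (s := (u : AddMonoidAlgebra R G).coeff.support) hne
  rw [hsupp, card_singleton] at this
  omega

end AddMonoidAlgebra

theorem Finset.exists_max_and_second_max {α : Type*} [LinearOrder α] {s : Finset α}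
    (hs : 1 < s.card) : ∃ a₀ ∈ s, ∃ a₁ ∈ s, a₁ < a₀ ∧ ∀ a ∈ s, a = a₀ ∨ a ≤ a₁ := by
  have hne : s.Nonempty := card_pos.1 (by omega)
  have hne' : (s.erase (s.max' hne)).Nonempty := by
    rw [← card_pos, card_erase_of_mem (s.max'_mem hne)]
    omega
  obtain ⟨ha₁, hne₁⟩ := mem_erase.1 ((s.erase (s.max' hne)).max'_mem hne')
  refine ⟨s.max' hne, s.max'_mem hne, _, hne₁, (s.le_max' _ hne₁).lt_of_ne ha₁, fun a ha => ?_⟩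
  exact or_iff_not_imp_left.2 fun h => le_max' _ _ (mem_erase.2 ⟨h, ha⟩)

section Gaps

variable {n : ℕ} {k : ℕ → ℤ} {A B : Finset ℤ}

theorem exists_gap_le_first_gap_of_image_eq_add (hk : StrictAntiOn k (Set.Iic n))
    (hA : 1 < A.card) (hB : 1 < B.card) (hAB : (range (n + 1)).image k = A + B) :
    ∃ i, 1 ≤ i ∧ i + 1 ≤ n ∧ k i - k (i + 1) ≤ k 0 - k 1 := by
  obtain ⟨a₀, ha₀, a₁, ha₁, ha, hAtop⟩ := exists_max_and_second_max hA
  obtain ⟨b₀, hb₀, b₁, hb₁, hb, hBtop⟩ := exists_max_and_second_max hB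
  wlog hle : a₀ - a₁ ≤ b₀ - b₁ generalizing A B a₀ a₁ b₀ b₁
  · exact this hB hA (hAB.trans (add_comm A B)) b₀ hb₀ b₁ hb₁ hb hBtop a₀ ha₀ a₁ ha₁ ha hAtop
      (by omega)
  have mem : ∀ {m}, m ∈ A + B ↔ ∃ i ≤ n, k i = m := by
    simp [← hAB]
  have hkle : ∀ {i j}, i ≤ n → j ≤ n → (k j ≤ k i ↔ i ≤ j) := fun hi hj => hk.le_iff_ge hj hi
  obtain ⟨i, hi, hki⟩ := mem.1 (add_mem_add ha₀ hb₁)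
  obtain ⟨j, hj, hkj⟩ := mem.1 (add_mem_add ha₁ hb₁)
  obtain ⟨i₀, hi₀, hki₀⟩ := mem.1 (add_mem_add ha₀ hb₀)
  have hk0 : k 0 = a₀ + b₀ := by
    obtain ⟨a, ha, b, hb, hab⟩ := mem_add.1 (mem.2 ⟨0, Nat.zero_le n, rfl⟩)
    have := (hkle (Nat.zero_le n) hi₀).2 (Nat.zero_le _)
    rcases hAtop a ha with rfl | h <;> rcases hBtop b hb with rfl | h' <;> omega
  have hi1 : 1 ≤ i := Nat.one_le_iff_ne_zero.2 (by rintro rfl; omega)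
  have hk1 : k 1 ≤ a₁ + b₀ := by
    obtain ⟨a, ha, b, hb, hab⟩ := mem_add.1 (mem.2 ⟨1, hi1.trans hi, rfl⟩)
    have : k 1 < k 0 := hk (Nat.zero_le n) (Set.mem_Iic.2 (hi1.trans hi)) one_pos
    rcases hAtop a ha with rfl | h <;> rcases hBtop b hb with rfl | h' <;> omega
  have hij : i + 1 ≤ j := by
    by_contra h
    have := (hkle hj hi).2 (by omega)
    omega
  have := (hkle (hij.trans hj) hj).2 hij
  exact ⟨i, hi1, hij.trans hj, by omega⟩

theorem exists_gap_le_last_gap_of_image_eq_add (hk : StrictAntiOn k (Set.Iic n))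
    (hA : 1 < A.card) (hB : 1 < B.card) (hAB : (range (n + 1)).image k = A + B) :
    ∃ j, j + 2 ≤ n ∧ k j - k (j + 1) ≤ k (n - 1) - k n := by
  have hk' : StrictAntiOn (fun i => -k (n - i)) (Set.Iic n) := fun i hi j hj hij =>
    neg_lt_neg (hk (Set.mem_Iic.2 (n.sub_le j)) (Set.mem_Iic.2 (n.sub_le i)) (by
      simp only [Set.mem_Iic] at hi hj; omega))
  have hAB' : (range (n + 1)).image (fun i => -k (n - i)) = -A + -B := by
    rw [← neg_add, ← hAB, ← image_neg_eq_neg, image_image]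
    ext m
    simp only [mem_image, mem_range, Function.comp_apply]
    constructor
    · rintro ⟨i, hi, rfl⟩
      exact ⟨n - i, by omega, rfl⟩
    · rintro ⟨i, hi, rfl⟩
      exact ⟨n - i, by omega, by rw [Nat.sub_sub_self (by omega)]⟩
  obtain ⟨i, hi1, hin, hgap⟩ := exists_gap_le_first_gap_of_image_eq_add hk'
    (by rwa [card_neg]) (by rwa [card_neg]) hAB'
  refine ⟨n - i - 1, by omega, ?_⟩
  have e1 : n - i - 1 + 1 = n - i := by omega
  have e2 : n - (i + 1) = n - i - 1 := by omega
  simp only [Nat.sub_zero, e2] at hgap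
  rw [e1]
  omega

end Gaps

theorem isMonomial_iff_card_support_eq_one {f : NL} :
    IsMonomial f ↔ f.coeff.support.card = 1 := by
  constructor
  · rintro ⟨c, k, hc, rfl⟩
    rw [mono, AddMonoidAlgebra.coeff_single, Finsupp.support_single _ hc.ne', card_singleton]
  · intro hf
    obtain ⟨k, hk⟩ := card_eq_one.1 hf
    obtain ⟨hc, hf⟩ := Finsupp.support_eq_singleton.1 hk
    exact ⟨f.coeff k, k, Nat.pos_of_ne_zero hc, AddMonoidAlgebra.coeff_injective hf⟩

theorem isUnit_of_isMonomial_of_dvd {f g : NL} (hg : IsMonomial g) (hgf : g ∣ f)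
    (hgcd : f.coeff.support.gcd f.coeff = 1) : IsUnit g := by
  obtain ⟨c, k, -, rfl⟩ := hg
  obtain ⟨q, rfl⟩ := hgf
  suffices c = 1 from this ▸ AddMonoidAlgebra.isUnit_single_one k
  refine Nat.dvd_one.1 (hgcd ▸ Finset.dvd_gcd fun m _ => ?_)
  rw [mono, AddMonoidAlgebra.coeff_single_mul_apply]
  exact dvd_mul_right c _

theorem Monolithic.irreducible {f : NL} (hf : Monolithic f) (hcard : 1 < f.coeff.support.card)
    (hgcd : f.coeff.support.gcd f.coeff = 1) : Irreducible f where
  not_isUnit := AddMonoidAlgebra.not_isUnit_of_one_lt_card_support hcard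
  isUnit_or_isUnit {g h} hgh := (hf.2 g h hgh).imp
    (fun hg => isUnit_of_isMonomial_of_dvd hg ⟨h, hgh⟩ hgcd)
    (fun hh => isUnit_of_isMonomial_of_dvd hh (Dvd.intro_left g hgh.symm) hgcd)

theorem HyperMonolithic.exists_support_eq_image {f : NL} (hf : HyperMonolithic f) :
    ∃ (n : ℕ) (k : ℕ → ℤ), 1 ≤ n ∧ StrictAntiOn k (Set.Iic n) ∧
      f.coeff.support = (range (n + 1)).image k ∧
      ((∀ i, 1 ≤ i → i + 1 ≤ n → k 0 - k 1 < k i - k (i + 1)) ∨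
        (∀ j, j + 2 ≤ n → k (n - 1) - k n < k j - k (j + 1))) := by
  obtain ⟨n, k, c, hn, hk, hc, rfl, hgap⟩ := hf
  refine ⟨n, k, hn, fun i _ j hj hij => hk i j hij hj, ?_, hgap⟩
  exact AddMonoidAlgebra.support_coeff_sum_single _ _ _ fun i hi =>
    (hc i (Nat.lt_succ_iff.1 (mem_range.1 hi))).ne'

theorem HyperMonolithic.one_lt_card_support {f : NL} (hf : HyperMonolithic f) :
    1 < f.coeff.support.card := by
  obtain ⟨n, k, hn, hk, hsupp, -⟩ := hf.exists_support_eq_image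
  rw [hsupp, one_lt_card]
  exact ⟨k 0, mem_image_of_mem k (by simp), k 1, mem_image_of_mem k (by rw [mem_range]; omega),
    (hk (Nat.zero_le n) hn one_pos).ne'⟩

theorem HyperMonolithic.monolithic {f : NL} (hf : HyperMonolithic f) : Monolithic f := by
  obtain ⟨n, k, hn, hk, hsupp, hgap⟩ := hf.exists_support_eq_image
  refine ⟨fun h => by simp [h] at hsupp, fun g h hgh => ?_⟩
  by_contra! ⟨hg, hh⟩
  rw [hgh, AddMonoidAlgebra.support_coeff_mul] at hsupp
  have hne := add_nonempty.1 (hsupp ▸ image_nonempty.2 nonempty_range_add_one)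
  have one_lt_card {x : NL} (hx : x.coeff.support.Nonempty) (hmono : ¬IsMonomial x) :
      1 < x.coeff.support.card := by
    rw [isMonomial_iff_card_support_eq_one] at hmono
    have := hx.card_pos
    omega
  have hg' := one_lt_card hne.1 hg
  have hh' := one_lt_card hne.2 hh
  rcases hgap with hgap | hgap
  · obtain ⟨i, hi1, hin, hle⟩ := exists_gap_le_first_gap_of_image_eq_add hk hg' hh' hsupp.symm
    exact (hgap i hi1 hin).not_ge hle
  · obtain ⟨j, hjn, hle⟩ := exists_gap_le_last_gap_of_image_eq_add hk hg' hh' hsupp.symm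
    exact (hgap j hjn).not_ge hle

/-- A hyper-monolithic polynomial whose coefficients have gcd 1 is irreducible. -/
theorem stmt15 (f : NL) (hf : HyperMonolithic f) (hgcd : f.coeff.support.gcd ⇑f.coeff = 1) :
    Irreducible f :=
  hf.monolithic.irreducible hf.one_lt_card_support hgcd
end
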